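/- With P a product of linear forms with non-negative coefficients in r variables as above, the abscissa of convergence of ζ(P;s) = ∑_{x̄=1}^∞ P(x̄)^{-s} equals r/κ if and only if every non-empty subpolynomial Q of P satisfies r(Q)/κ(Q) ≥ r/κ. -/

import Mathlib

/-!
Let `λ(S) = κ - κ(S)` be the number of forms involving a variable outside `S`. On the points
that equal `1` on `S` and have maximum `n` off `S`, of which there are `≫ n ^ (r - |S| - 1)`, one
has `P ≪ n ^ λ(S)`; hence convergence at `s` forces `r - |S| < s λ(S)`, so the abscissa is at
least `(r - |S|) / λ(S)`. For `S = ∅` this is `r / κ`, and a subpolynomial with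
`r(Q)/κ(Q) < r/κ` makes the bound exceed `r / κ`.

Conversely, if `r κ(S) ≤ κ |S|` for all `S`, Hall's theorem gives a bijection
`e : [κ] × [r] → [r] × [κ]` with `a i (e (i, u)).1 ≠ 0`. Bounding each copy of `Pᵢ` in `Pᵢ ^ r`
below by the monomial that `e` assigns to it gives `P ^ r ≥ A ∏ⱼ xⱼ ^ κ`, so for `s > r / κ` the
series is dominated by `ζ(s κ / r) ^ r`.
-/

open Finset Function

lemma summable_pnat_rpow_iff {p : ℝ} : Summable (fun n : ℕ+ => ((n : ℕ) : ℝ) ^ p) ↔ p < -1 :=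
  summable_pnat_iff_summable_nat.trans Real.summable_nat_rpow

lemma summable_prod_apply {σ α : Type*} [Fintype σ] {g : σ → α → ℝ} (hg₀ : ∀ j n, 0 ≤ g j n)
    (hg : ∀ j, Summable (g j)) : Summable fun x : σ → α => ∏ j, g j (x j) := by
  classical
  refine summable_of_sum_le (c := ∏ j, ∑' n, g j n)
    (fun x => prod_nonneg fun j _ => hg₀ j (x j)) fun u => ?_
  have hu : u ⊆ Fintype.piFinset fun j => u.image (· j) := fun x hx =>
    Fintype.mem_piFinset.mpr fun j => mem_image_of_mem _ hx
  calc ∑ x ∈ u, ∏ j, g j (x j)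
      ≤ ∑ x ∈ Fintype.piFinset (fun j => u.image (· j)), ∏ j, g j (x j) :=
        sum_le_sum_of_subset_of_nonneg hu fun x _ _ => prod_nonneg fun j _ => hg₀ j (x j)
    _ = ∏ j, ∑ n ∈ u.image (· j), g j n := (prod_univ_sum _ _).symm
    _ ≤ ∏ j, ∑' n, g j n :=
        prod_le_prod (fun j _ => sum_nonneg fun n _ => hg₀ j n)
          fun j _ => (hg j).sum_le_tsum _ fun n _ => hg₀ j n

lemma card_lt_of_summable_of_rpow_le {τ : Type*} [Fintype τ] (j₀ : τ) {f : (τ → ℕ+) → ℝ}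
    {C t : ℝ} (hC : 0 < C)
    (hf : ∀ y, (∀ j, y j ≤ y j₀) → C * ((y j₀ : ℕ) : ℝ) ^ (-t) ≤ f y) (hsum : Summable f) :
    (Fintype.card τ : ℝ) < t := by
  classical
  -- `Φ ⟨n, z⟩` has maximal coordinate `n` at `j₀`; there are `n ^ (card τ - 1)` such points.
  let Φ : (Σ n : ℕ+, ({j // j ≠ j₀} → Fin n)) → (τ → ℕ+) := fun p j =>
    if h : j = j₀ then p.1 else Nat.succPNat (p.2 ⟨j, h⟩)
  have hΦ₀ : ∀ p, Φ p j₀ = p.1 := fun p => dif_pos rfl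
  have hΦ : ∀ p, ∀ j (h : j ≠ j₀), Φ p j = Nat.succPNat (p.2 ⟨j, h⟩) := fun p j h => dif_neg h
  have hΦ_le : ∀ p j, Φ p j ≤ Φ p j₀ := by
    intro p j
    by_cases h : j = j₀
    · rw [h]
    · rw [hΦ p j h, hΦ₀, ← PNat.coe_le_coe, Nat.succPNat_coe]
      exact (p.2 ⟨j, h⟩).isLt
  have hΦ_inj : Injective Φ := by
    rintro ⟨n, z⟩ ⟨n', z'⟩ h
    obtain rfl : n = n' := by simpa only [hΦ₀] using congrFun h j₀
    congr 1
    funext ⟨j, hj⟩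
    have := congrFun h j
    rw [hΦ _ j hj, hΦ _ j hj] at this
    exact Fin.ext (Nat.succPNat_injective this)
  have hg₀ : ∀ p : (Σ n : ℕ+, ({j // j ≠ j₀} → Fin n)), 0 ≤ C * ((p.1 : ℕ) : ℝ) ^ (-t) :=
    fun p => by positivity
  have hg : Summable fun p : (Σ n : ℕ+, ({j // j ≠ j₀} → Fin n)) => C * ((p.1 : ℕ) : ℝ) ^ (-t) :=
    (hsum.comp_injective hΦ_inj).of_nonneg_of_le hg₀ fun p => by
      simpa only [comp_apply, hΦ₀] using hf (Φ p) (hΦ_le p)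
  have hcard : 1 ≤ Fintype.card τ := Fintype.card_pos_iff.mpr ⟨j₀⟩
  have hfiber : ∀ n : ℕ+, ∑' _ : {j // j ≠ j₀} → Fin n, C * ((n : ℕ) : ℝ) ^ (-t)
      = C * ((n : ℕ) : ℝ) ^ ((Fintype.card τ : ℝ) - 1 - t) := by
    intro n
    have hn : (0 : ℝ) < (n : ℕ) := by exact_mod_cast n.pos
    rw [tsum_const, Nat.card_eq_fintype_card, Fintype.card_fun, Fintype.card_fin,
      Fintype.card_subtype_compl, Fintype.card_subtype_eq,
      nsmul_eq_mul, Nat.cast_pow, ← Real.rpow_natCast, Nat.cast_sub hcard, Nat.cast_one,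
      sub_eq_add_neg _ t, Real.rpow_add hn]
    ring
  have := ((summable_sigma_of_nonneg hg₀).mp hg).2
  simp only [hfiber] at this
  have := summable_pnat_rpow_iff.mp ((summable_mul_left_iff hC.ne').mp this)
  linarith

section LinearFormProduct

variable {ι σ : Type*}

noncomputable def supportedCard (a : ι → σ → ℝ) (S : Finset σ) : ℕ :=
  Nat.card {i // ∀ j ∉ S, a i j = 0}

lemma supportedCard_empty {a : ι → σ → ℝ} (hpos : ∀ i, ∃ j, 0 < a i j) : supportedCard a ∅ = 0 := by
  rw [supportedCard, Nat.card_eq_zero]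
  left
  refine ⟨fun ⟨i, hi⟩ => ?_⟩
  obtain ⟨j, hj⟩ := hpos i
  exact hj.ne' (hi j (notMem_empty j))

variable [Fintype ι]

lemma supportedCard_le (a : ι → σ → ℝ) (S : Finset σ) : supportedCard a S ≤ Fintype.card ι :=
  Nat.card_eq_fintype_card (α := ι) ▸ Finite.card_subtype_le _

variable [Fintype σ]

def linearFormProd (a : ι → σ → ℝ) (x : σ → ℝ) : ℝ := ∏ i, ∑ j, a i j * x j

def summableExponents (a : ι → σ → ℝ) : Set ℝ :=
  {s | Summable fun x : σ → ℕ+ => linearFormProd a (fun j => ((x j : ℕ) : ℝ)) ^ (-s)}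

variable {a : ι → σ → ℝ}

lemma linearFormProd_le_linearFormProd (hnn : ∀ i j, 0 ≤ a i j) {x y : σ → ℝ}
    (hx : 0 ≤ x) (hxy : x ≤ y) : linearFormProd a x ≤ linearFormProd a y :=
  prod_le_prod (fun i _ => sum_nonneg fun j _ => mul_nonneg (hnn i j) (hx j))
    fun i _ => sum_le_sum fun j _ => mul_le_mul_of_nonneg_left (hxy j) (hnn i j)

lemma linearFormProd_nonneg (hnn : ∀ i j, 0 ≤ a i j) {x : σ → ℝ} (hx : 0 ≤ x) :
    0 ≤ linearFormProd a x :=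
  prod_nonneg fun i _ => sum_nonneg fun j _ => mul_nonneg (hnn i j) (hx j)

lemma linearFormProd_one_pos (hnn : ∀ i j, 0 ≤ a i j) (hpos : ∀ i, ∃ j, 0 < a i j) :
    0 < linearFormProd a 1 :=
  prod_pos fun i _ => by
    obtain ⟨j, hj⟩ := hpos i
    simpa using sum_pos' (fun j _ => hnn i j) ⟨j, mem_univ j, hj⟩

lemma linearFormProd_le_mul_pow (hnn : ∀ i j, 0 ≤ a i j) {S : Finset σ} {x : σ → ℝ} {n : ℝ}
    (hx : 0 ≤ x) (hxS : ∀ j ∈ S, x j ≤ 1) (hxn : ∀ j, x j ≤ n) :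
    linearFormProd a x ≤ linearFormProd a 1 * n ^ (Fintype.card ι - supportedCard a S) := by
  classical
  have hform : ∀ i, ∑ j, a i j * x j
      ≤ (∑ j, a i j) * if ∀ j ∉ S, a i j = 0 then 1 else n := by
    intro i
    split_ifs with hi
    · rw [mul_one]
      refine sum_le_sum fun j _ => ?_
      by_cases hj : j ∈ S
      · exact mul_le_of_le_one_right (hnn i j) (hxS j hj)
      · simp [hi j hj]
    · rw [sum_mul]
      exact sum_le_sum fun j _ => mul_le_mul_of_nonneg_left (hxn j) (hnn i j)
  calc linearFormProd a x
      ≤ ∏ i, (∑ j, a i j) * if ∀ j ∉ S, a i j = 0 then 1 else n :=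
        prod_le_prod (fun i _ => sum_nonneg fun j _ => mul_nonneg (hnn i j) (hx j))
          fun i _ => hform i
    _ = linearFormProd a 1 * n ^ (Fintype.card ι - supportedCard a S) := by
        rw [prod_mul_distrib, prod_ite, prod_const_one, prod_const, one_mul, ← Fintype.card_subtype,
          Fintype.card_subtype_compl, supportedCard, Nat.card_eq_fintype_card]
        simp [linearFormProd]

lemma card_sub_card_lt_mul_of_mem_summableExponents (hnn : ∀ i j, 0 ≤ a i j)
    (hpos : ∀ i, ∃ j, 0 < a i j) {S : Finset σ} (hS : S ≠ univ) {s : ℝ}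
    (hs : s ∈ summableExponents a) :
    (Fintype.card σ : ℝ) - #S < s * (Fintype.card ι - supportedCard a S) := by
  classical
  obtain ⟨j₀, hj₀⟩ : ∃ j, j ∉ S := by simpa [eq_univ_iff_forall] using hS
  let embed : ({j // j ∉ S} → ℕ+) → σ → ℕ+ := fun y j => if h : j ∉ S then y ⟨j, h⟩ else 1
  have hembed : Injective embed := fun y y' h => funext fun j => by
    simpa [embed, j.2] using congrFun h j
  set B := linearFormProd a 1
  have hB : 0 < B := linearFormProd_one_pos hnn hpos
  let P : ({j // j ∉ S} → ℕ+) → ℝ := fun y => linearFormProd a fun j => ((embed y j : ℕ) : ℝ)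
  have hP_ge : ∀ y, B ≤ P y := fun y =>
    linearFormProd_le_linearFormProd hnn zero_le_one fun j =>
    Nat.one_le_cast.mpr (embed y j).pos
  have hP_le : ∀ y, (∀ j, y j ≤ y ⟨j₀, hj₀⟩) →
      P y ≤ B * ((y ⟨j₀, hj₀⟩ : ℕ) : ℝ) ^ ((Fintype.card ι : ℝ) - supportedCard a S) := by
    intro y hy
    rw [← Nat.cast_sub (supportedCard_le a S), Real.rpow_natCast]
    refine linearFormProd_le_mul_pow hnn (fun j => Nat.cast_nonneg _) (fun j hj => ?_) fun j => ?_
    · simp [embed, hj]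
    · by_cases hj : j ∈ S
      · simp only [embed, hj, not_true_eq_false, dite_false, PNat.one_coe, Nat.cast_one]
        exact Nat.one_le_cast.mpr (y _).pos
      · simpa [embed, hj] using hy ⟨j, hj⟩
  have hsum : Summable fun y => P y ^ (-s) := hs.comp_injective hembed
  have hcard : (Fintype.card {j // j ∉ S} : ℝ) = Fintype.card σ - #S := by
    rw [Fintype.card_subtype_compl, Fintype.card_coe, Nat.cast_sub (card_le_univ S)]
  rcases le_or_gt s 0 with hs₀ | hs₀
  · have := card_lt_of_summable_of_rpow_le ⟨j₀, hj₀⟩ (Real.rpow_pos_of_pos hB (-s)) (t := 0)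
      (fun y _ => by
        simpa using Real.rpow_le_rpow hB.le (hP_ge y) (neg_nonneg.mpr hs₀)) hsum
    linarith [Fintype.card_pos (α := {j // j ∉ S}) (h := ⟨⟨j₀, hj₀⟩⟩)]
  · refine hcard ▸ card_lt_of_summable_of_rpow_le ⟨j₀, hj₀⟩
      (Real.rpow_pos_of_pos hB (-s)) (fun y hy => ?_) hsum
    have hn : (0 : ℝ) < ((y ⟨j₀, hj₀⟩ : ℕ) : ℝ) := by exact_mod_cast (y _).pos
    calc B ^ (-s) * ((y ⟨j₀, hj₀⟩ : ℕ) : ℝ) ^ (-(s * (Fintype.card ι - supportedCard a S)))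
        = (B * ((y ⟨j₀, hj₀⟩ : ℕ) : ℝ) ^ ((Fintype.card ι : ℝ) - supportedCard a S)) ^ (-s) := by
          rw [Real.mul_rpow hB.le (by positivity), ← Real.rpow_mul hn.le]
          ring_nf
      _ ≤ P y ^ (-s) :=
          Real.rpow_le_rpow_of_nonpos (hB.trans_le (hP_ge y)) (hP_le y hy) (by linarith)

lemma mul_prod_pow_le_linearFormProd_pow (hnn : ∀ i j, 0 ≤ a i j) (e : ι × σ ≃ σ × ι)
    {x : σ → ℝ} (hx : 0 ≤ x) :
    (∏ p, a p.1 (e p).1) * ∏ j, x j ^ Fintype.card ι ≤ linearFormProd a x ^ Fintype.card σ := by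
  have hx_prod : ∏ j, x j ^ Fintype.card ι = ∏ p, x (e p).1 := by
    rw [e.prod_comp (fun q => x q.1), Fintype.prod_prod_type]
    simp
  calc (∏ p, a p.1 (e p).1) * ∏ j, x j ^ Fintype.card ι
      = ∏ i, ∏ u, a i (e (i, u)).1 * x (e (i, u)).1 := by
        rw [hx_prod, ← prod_mul_distrib, Fintype.prod_prod_type]
    _ ≤ ∏ i, ∏ _u : σ, ∑ j, a i j * x j :=
        prod_le_prod (fun i _ => prod_nonneg fun u _ => mul_nonneg (hnn _ _) (hx _))
          fun i _ => prod_le_prod (fun u _ => mul_nonneg (hnn _ _) (hx _))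
            fun u _ => single_le_sum (f := fun j => a i j * x j)
              (fun j _ => mul_nonneg (hnn i j) (hx j)) (mem_univ _)
    _ = linearFormProd a x ^ Fintype.card σ := by
        simp [linearFormProd, prod_pow]

lemma mem_summableExponents_of_equiv [Nonempty σ] (hnn : ∀ i j, 0 ≤ a i j)
    (e : ι × σ ≃ σ × ι) (he : ∀ p, a p.1 (e p).1 ≠ 0) {s : ℝ}
    (hs : (Fintype.card σ : ℝ) < s * Fintype.card ι) : s ∈ summableExponents a := by
  set m : ℝ := (Fintype.card σ : ℝ)
  have hm : 0 < m := by positivity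
  set A := ∏ p, a p.1 (e p).1
  have hA : 0 < A := prod_pos fun p _ => (hnn _ _).lt_of_ne' (he p)
  set t := s / m with ht_def
  have ht : 0 < t := div_pos (by nlinarith [Nat.cast_nonneg (α := ℝ) (Fintype.card ι)]) hm
  have hbound : ∀ x : σ → ℕ+, linearFormProd a (fun j => ((x j : ℕ) : ℝ)) ^ (-s)
      ≤ A ^ (-t) * ∏ j, ((x j : ℕ) : ℝ) ^ (-(t * Fintype.card ι)) := by
    intro x
    have hx : ∀ j, (0 : ℝ) < ((x j : ℕ) : ℝ) := fun j => by exact_mod_cast (x j).pos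
    calc linearFormProd a (fun j => ((x j : ℕ) : ℝ)) ^ (-s)
        = (linearFormProd a (fun j => ((x j : ℕ) : ℝ)) ^ Fintype.card σ) ^ (-t) := by
          rw [← Real.rpow_natCast, ← Real.rpow_mul (linearFormProd_nonneg hnn fun j => (hx j).le)]
          congr 1
          rw [ht_def, mul_neg, mul_div_cancel₀ s hm.ne']
      _ ≤ (A * ∏ j, ((x j : ℕ) : ℝ) ^ Fintype.card ι) ^ (-t) :=
          Real.rpow_le_rpow_of_nonpos (by positivity)
            (mul_prod_pow_le_linearFormProd_pow hnn e fun j => (hx j).le) (by linarith)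
      _ = A ^ (-t) * ∏ j, ((x j : ℕ) : ℝ) ^ (-(t * Fintype.card ι)) := by
          rw [Real.mul_rpow hA.le (prod_nonneg fun j _ => pow_nonneg (hx j).le _),
            ← Real.finsetProd_rpow _ _ fun j _ => pow_nonneg (hx j).le _]
          congr 1
          refine prod_congr rfl fun j _ => ?_
          rw [← Real.rpow_natCast, ← Real.rpow_mul (hx j).le]
          ring_nf
  have hζ : Summable fun n : ℕ+ => ((n : ℕ) : ℝ) ^ (-(t * Fintype.card ι)) := by
    rw [summable_pnat_rpow_iff, neg_lt_neg_iff, ht_def, div_mul_eq_mul_div, one_lt_div hm]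
    exact hs
  refine Summable.of_nonneg_of_le (fun x => Real.rpow_nonneg
    (linearFormProd_nonneg hnn fun j => Nat.cast_nonneg _) _) hbound
    ((summable_prod_apply (fun _ n => by positivity) fun _ => hζ).mul_left _)

lemma exists_equiv_of_card_mul_supportedCard_le
    (h : ∀ T : Finset σ, Fintype.card σ * supportedCard a T ≤ Fintype.card ι * #T) :
    ∃ e : ι × σ ≃ σ × ι, ∀ p, a p.1 (e p).1 ≠ 0 := by
  classical
  obtain ⟨f, hf_inj, hf⟩ :=
    (Fintype.all_card_le_filter_rel_iff_exists_injective fun (p : ι × σ) (q : σ × ι) =>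
      a p.1 q.1 ≠ 0).mp fun A => by
      set I := A.image Prod.fst
      set N : Finset σ := {j | ∃ i ∈ I, a i j ≠ 0}
      have hA : #A ≤ #I * Fintype.card σ := by
        simpa using card_le_card fun p hp => mem_product.mpr ⟨mem_image_of_mem _ hp, mem_univ p.2⟩
      have hI : #I ≤ supportedCard a N := by
        rw [supportedCard, Nat.card_eq_fintype_card, Fintype.card_subtype]
        refine card_le_card fun i hi => mem_filter.mpr ⟨mem_univ i, fun j hj => ?_⟩
        by_contra hij
        exact hj (mem_filter.mpr ⟨mem_univ j, i, hi, hij⟩)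
      have hN : N ×ˢ (univ : Finset ι) ⊆ ({q | ∃ p ∈ A, a p.1 q.1 ≠ 0} : Finset (σ × ι)) := by
        intro q hq
        obtain ⟨i, hi, hiq⟩ := (mem_filter.mp (mem_product.mp hq).1).2
        obtain ⟨p, hp, rfl⟩ := mem_image.mp hi
        exact mem_filter.mpr ⟨mem_univ q, p, hp, hiq⟩
      calc #A ≤ #I * Fintype.card σ := hA
        _ ≤ Fintype.card σ * supportedCard a N := by rw [mul_comm]; gcongr
        _ ≤ Fintype.card ι * #N := h N
        _ = #(N ×ˢ (univ : Finset ι)) := by rw [card_product, card_univ, mul_comm]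
        _ ≤ _ := card_le_card hN
  have hf_bij : Bijective f :=
    (Fintype.bijective_iff_injective_and_card f).mpr ⟨hf_inj, by simp [mul_comm]⟩
  exact ⟨Equiv.ofBijective f hf_bij, hf⟩

lemma card_sub_card_le_sInf_mul (hnn : ∀ i j, 0 ≤ a i j) (hpos : ∀ i, ∃ j, 0 < a i j)
    {S : Finset σ} (hS : S ≠ univ) (hne : (summableExponents a).Nonempty) :
    (Fintype.card σ : ℝ) - #S ≤
      sInf (summableExponents a) * (Fintype.card ι - supportedCard a S) := by
  have hforms : (0 : ℝ) ≤ Fintype.card ι - supportedCard a S :=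
    sub_nonneg.mpr (by exact_mod_cast supportedCard_le a S)
  rw [mul_comm, ← smul_eq_mul, ← Real.sInf_smul_of_nonneg hforms]
  refine le_csInf hne.smul_set ?_
  rintro _ ⟨s, hs, rfl⟩
  exact (card_sub_card_lt_mul_of_mem_summableExponents hnn hpos hS hs).le.trans_eq (mul_comm _ _)

lemma card_lt_mul_of_mem_summableExponents [Nonempty σ] (hnn : ∀ i j, 0 ≤ a i j)
    (hpos : ∀ i, ∃ j, 0 < a i j) {s : ℝ} (hs : s ∈ summableExponents a) :
    (Fintype.card σ : ℝ) < s * Fintype.card ι := by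
  simpa [supportedCard_empty hpos] using
    card_sub_card_lt_mul_of_mem_summableExponents hnn hpos univ_nonempty.ne_empty.symm hs

lemma le_card_div_supportedCard_of_sInf_eq [Nonempty ι] [Nonempty σ] (hnn : ∀ i j, 0 ≤ a i j)
    (hpos : ∀ i, ∃ j, 0 < a i j)
    (habs : sInf (summableExponents a) = (Fintype.card σ : ℝ) / Fintype.card ι)
    {S : Finset σ} (hS : 0 < supportedCard a S) :
    (Fintype.card σ : ℝ) / Fintype.card ι ≤ #S / supportedCard a S := by
  have hσ : (0 : ℝ) < Fintype.card σ := by positivity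
  have hι : (0 : ℝ) < Fintype.card ι := by positivity
  have hk : (0 : ℝ) < supportedCard a S := by exact_mod_cast hS
  have hkι : (supportedCard a S : ℝ) ≤ Fintype.card ι := by exact_mod_cast supportedCard_le a S
  by_cases hSu : S = univ
  · subst hSu
    rw [card_univ]
    exact div_le_div_of_nonneg_left hσ.le hk hkι
  have hne : (summableExponents a).Nonempty := by
    by_contra h
    rw [Set.not_nonempty_iff_eq_empty.mp h, Real.sInf_empty] at habs
    exact (div_pos hσ hι).ne habs
  have := card_sub_card_le_sInf_mul hnn hpos hSu hne
  rw [habs] at this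
  rw [div_le_div_iff₀ hι hk]
  field_simp at this
  linarith

lemma sInf_summableExponents_eq_of_forall_le [Nonempty ι] [Nonempty σ] (hnn : ∀ i j, 0 ≤ a i j)
    (hpos : ∀ i, ∃ j, 0 < a i j)
    (h : ∀ S : Finset σ, 0 < supportedCard a S →
      (Fintype.card σ : ℝ) / Fintype.card ι ≤ #S / supportedCard a S) :
    sInf (summableExponents a) = (Fintype.card σ : ℝ) / Fintype.card ι := by
  have hι : (0 : ℝ) < Fintype.card ι := by positivity
  obtain ⟨e, he⟩ := exists_equiv_of_card_mul_supportedCard_le (a := a) fun T => by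
    rcases (supportedCard a T).eq_zero_or_pos with hT | hT
    · simp [hT]
    have hk : (0 : ℝ) < supportedCard a T := by exact_mod_cast hT
    have := h T hT
    rw [div_le_div_iff₀ hι hk, mul_comm (#T : ℝ)] at this
    exact_mod_cast this
  have hmem : ∀ s, (Fintype.card σ : ℝ) / Fintype.card ι < s → s ∈ summableExponents a :=
    fun s hs => mem_summableExponents_of_equiv hnn e he ((div_lt_iff₀ hι).mp hs)
  exact csInf_eq_of_forall_ge_of_forall_gt_exists_lt ((exists_gt _).imp hmem)
    (fun s hs => ((div_lt_iff₀ hι).mpr (card_lt_mul_of_mem_summableExponents hnn hpos hs)).le)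
    fun w hw => (exists_between hw).imp fun s hs => ⟨hmem s hs.1, hs.2⟩

theorem sInf_summableExponents_eq_card_div_card_iff [Nonempty ι] [Nonempty σ]
    (hnn : ∀ i j, 0 ≤ a i j) (hpos : ∀ i, ∃ j, 0 < a i j) :
    sInf (summableExponents a) = (Fintype.card σ : ℝ) / Fintype.card ι ↔
      ∀ S : Finset σ, 0 < supportedCard a S →
        (Fintype.card σ : ℝ) / Fintype.card ι ≤ #S / supportedCard a S :=
  ⟨fun h _ => le_card_div_supportedCard_of_sInf_eq hnn hpos h,
    sInf_summableExponents_eq_of_forall_le hnn hpos⟩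

end LinearFormProduct

theorem mellin_abscissa_eq_r_div_kappa_iff_general {r κ : ℕ} (hr : 0 < r) (hκ : 0 < κ)
    (a : Fin κ → Fin r → ℝ)
    (hnn : ∀ i j, 0 ≤ a i j)
    (hpos : ∀ i, ∃ j, 0 < a i j) :
    sInf {s : ℝ | Summable (fun x : Fin r → ℕ+ =>
        (∏ i, ∑ j, a i j * ((x j : ℕ) : ℝ)) ^ (-s))} = (r : ℝ) / κ ↔
      ∀ S : Finset (Fin r),
        0 < Nat.card {i : Fin κ // ∀ j ∉ S, a i j = 0} →
        (r : ℝ) / κ ≤ (S.card : ℝ) / (Nat.card {i : Fin κ // ∀ j ∉ S, a i j = 0}) := by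
  have : Nonempty (Fin r) := ⟨⟨0, hr⟩⟩
  have : Nonempty (Fin κ) := ⟨⟨0, hκ⟩⟩
  simpa only [summableExponents, linearFormProd, supportedCard, Fintype.card_fin] using
    sInf_summableExponents_eq_card_div_card_iff hnn hpos

/-- With `P = P₁ ⋯ P_κ` a product of linear forms with non-negative coefficients in `r`
variables (each form having a positive coefficient, every variable occurring), the abscissa
of convergence of `ζ(P;s) = ∑_{x̄ ≥ 1} P(x̄)^{-s}` equals `r/κ` if and only if every
non-empty subpolynomial `Q` (given by a subset `S` of the variables, with `r(Q) = |S|`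
and `κ(Q)` the number of forms supported on `S`) satisfies `r(Q)/κ(Q) ≥ r/κ`. -/
theorem mellin_abscissa_eq_r_div_kappa_iff {r κ : ℕ} (hr : 0 < r) (hκ : 0 < κ)
    (a : Fin κ → Fin r → ℝ)
    (hnn : ∀ i j, 0 ≤ a i j)
    (hpos : ∀ i, ∃ j, 0 < a i j)
    (hvar : ∀ j, ∃ i, 0 < a i j) :
    sInf {s : ℝ | Summable (fun x : Fin r → ℕ+ =>
        (∏ i, ∑ j, a i j * ((x j : ℕ) : ℝ)) ^ (-s))} = (r : ℝ) / κ ↔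
      ∀ S : Finset (Fin r),
        0 < Nat.card {i : Fin κ // ∀ j ∉ S, a i j = 0} →
        (r : ℝ) / κ ≤ (S.card : ℝ) / (Nat.card {i : Fin κ // ∀ j ∉ S, a i j = 0}) :=
  mellin_abscissa_eq_r_div_kappa_iff_general hr hκ a hnn hpos
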